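/- arXiv:2002.12321 — 7 statements merged into one kernel-verified Lean document; each statement's English description precedes it below -/
import Mathlib

section
/- Let b > 0 and let Z₁ and Z₂ be independent real random variables, where Z₁ has the Laplace distribution with scale 2b and Z₂ has the Laplace distribution with scale b. Then for every constant C > 0, P(Z₁ ≥ Z₂ − C) = 1 − (2/3)·exp(−C/(2b)) + (1/6)·exp(−C/b). -/
open MeasureTheory ProbabilityTheory Real

/-- A real random variable `Z` has the Laplace distribution with scale `b > 0` (with respect to
the probability measure `P`) if it is measurable and its law has density
`x ↦ (1/(2b)) · exp(−|x|/b)` with respect to Lebesgue measure. -/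
def HasLaplaceLaw {Ω : Type*} [MeasurableSpace Ω] (P : Measure Ω) (Z : Ω → ℝ) (b : ℝ) : Prop :=
  Measurable Z ∧
    P.map Z = volume.withDensity (fun x => ENNReal.ofReal ((1 / (2 * b)) * Real.exp (-|x| / b)))

/-!
By independence the joint law of `(Z₁, Z₂)` is the product of the marginals, so by Tonelli
`P(Z₂ - C ≤ Z₁) = ∫ f_{2b}(x) F_b(x + C) dx`, where `f_s` is the Laplace density of scale `s` and
`F_s` its distribution function. On each of `(-∞, -C]`, `[-C, 0]` and `(0, ∞)` this integrand is
a linear combination of exponentials `exp (c * x)`, which integrate in closed form.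
-/

open Set

theorem ProbabilityTheory.IndepFun.measure_sub_le_eq_lintegral {Ω : Type*} [MeasurableSpace Ω]
    {P : Measure Ω} [IsFiniteMeasure P] {X Y : Ω → ℝ} (hXY : IndepFun X Y P) (hX : Measurable X)
    (hY : Measurable Y) (C : ℝ) :
    P {ω | Y ω - C ≤ X ω} = ∫⁻ x, P.map Y (Iic (x + C)) ∂P.map X := by
  have hS : MeasurableSet {p : ℝ × ℝ | p.2 - C ≤ p.1} :=
    measurableSet_le (by fun_prop) (by fun_prop)
  have hslice (x : ℝ) : Prod.mk x ⁻¹' {p : ℝ × ℝ | p.2 - C ≤ p.1} = Iic (x + C) := by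
    ext y; simp
  have hmap := (indepFun_iff_map_prod_eq_prod_map_map hX.aemeasurable hY.aemeasurable).mp hXY
  calc P {ω | Y ω - C ≤ X ω} = P.map (fun ω => (X ω, Y ω)) {p | p.2 - C ≤ p.1} :=
        (Measure.map_apply (hX.prodMk hY) hS).symm
    _ = ∫⁻ x, P.map Y (Iic (x + C)) ∂P.map X := by
        simp only [hmap, Measure.prod_apply hS, hslice]

theorem lintegral_ofReal_withDensity_ofReal {α : Type*} [MeasurableSpace α] {μ : Measure α}
    {f g : α → ℝ} (hf : Measurable f) (hf₀ : ∀ x, 0 ≤ f x) (hg : Measurable g) (hg₀ : ∀ x, 0 ≤ g x)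
    (hfg : Integrable (fun x => f x * g x) μ) :
    ∫⁻ x, ENNReal.ofReal (g x) ∂μ.withDensity (fun x => ENNReal.ofReal (f x)) =
      ENNReal.ofReal (∫ x, f x * g x ∂μ) := by
  rw [lintegral_withDensity_eq_lintegral_mul _ hf.ennreal_ofReal hg.ennreal_ofReal,
    ofReal_integral_eq_lintegral_ofReal hfg
      (Filter.Eventually.of_forall fun x => mul_nonneg (hf₀ x) (hg₀ x))]
  simp only [Pi.mul_apply, ENNReal.ofReal_mul (hf₀ _)]

theorem integral_exp_mul {c : ℝ} (hc : c ≠ 0) (u v : ℝ) :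
    ∫ x in u..v, exp (c * x) = (exp (c * v) - exp (c * u)) / c := by
  rw [intervalIntegral.integral_comp_mul_left exp hc, integral_exp, smul_eq_mul, inv_mul_eq_div]

noncomputable def laplacePDF (b x : ℝ) : ℝ := 1 / (2 * b) * exp (-|x| / b)

noncomputable def laplaceCDF (b t : ℝ) : ℝ :=
  if t ≤ 0 then exp (t / b) / 2 else 1 - exp (-t / b) / 2

noncomputable def laplaceMeasure (b : ℝ) : Measure ℝ :=
  volume.withDensity fun x => ENNReal.ofReal (laplacePDF b x)

theorem hasLaplaceLaw_iff {Ω : Type*} [MeasurableSpace Ω] {P : Measure Ω} {Z : Ω → ℝ} {b : ℝ} :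
    HasLaplaceLaw P Z b ↔ Measurable Z ∧ P.map Z = laplaceMeasure b :=
  Iff.rfl

section Laplace

variable {b C : ℝ}

theorem laplacePDF_nonneg (hb : 0 < b) (x : ℝ) : 0 ≤ laplacePDF b x := by
  unfold laplacePDF; positivity

theorem measurable_laplacePDF : Measurable (laplacePDF b) := by
  unfold laplacePDF; fun_prop

theorem laplacePDF_neg (x : ℝ) : laplacePDF b (-x) = laplacePDF b x := by
  simp [laplacePDF]

theorem laplacePDF_of_nonpos {x : ℝ} (hx : x ≤ 0) : laplacePDF b x = exp (b⁻¹ * x) / (2 * b) := by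
  rw [laplacePDF, abs_of_nonpos hx]; ring_nf

theorem laplacePDF_of_nonneg {x : ℝ} (hx : 0 ≤ x) :
    laplacePDF b x = exp (-b⁻¹ * x) / (2 * b) := by
  rw [laplacePDF, abs_of_nonneg hx]; ring_nf

theorem laplaceCDF_of_nonneg {t : ℝ} (ht : 0 ≤ t) : laplaceCDF b t = 1 - exp (-t / b) / 2 := by
  rcases ht.eq_or_lt with rfl | ht
  · norm_num [laplaceCDF]
  · rw [laplaceCDF, if_neg ht.not_ge]

theorem measurable_laplaceCDF : Measurable (laplaceCDF b) :=
  Measurable.ite measurableSet_Iic (by fun_prop) (by fun_prop)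

theorem integral_laplacePDF (hb : 0 < b) : ∫ x, laplacePDF b x = 1 := by
  calc ∫ x, laplacePDF b x = ∫ x, (fun y => 1 / (2 * b) * exp (-b⁻¹ * y)) |x| := by
        simp only [laplacePDF, neg_div, div_eq_inv_mul |_|, neg_mul]
    _ = 1 := by
        rw [integral_comp_abs (f := fun y => 1 / (2 * b) * exp (-b⁻¹ * y)), integral_const_mul,
          integral_exp_mul_Ioi (neg_neg_of_pos (inv_pos.2 hb))]
        field_simp
        simp

theorem integrable_laplacePDF (hb : 0 < b) : Integrable (laplacePDF b) :=
  .of_integral_ne_zero (by rw [integral_laplacePDF hb]; exact one_ne_zero)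

theorem setIntegral_Iic_laplacePDF_of_nonpos (hb : 0 < b) {t : ℝ} (ht : t ≤ 0) :
    ∫ x in Iic t, laplacePDF b x = exp (t / b) / 2 := by
  rw [setIntegral_congr_fun measurableSet_Iic fun x hx => laplacePDF_of_nonpos (hx.out.trans ht),
    integral_div, integral_exp_mul_Iic (inv_pos.2 hb)]
  field_simp

theorem setIntegral_Ioi_laplacePDF_of_nonneg (hb : 0 < b) {t : ℝ} (ht : 0 ≤ t) :
    ∫ x in Ioi t, laplacePDF b x = exp (-t / b) / 2 := by
  have h := integral_comp_neg_Ioi t (laplacePDF b)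
  simp only [laplacePDF_neg] at h
  rw [h, setIntegral_Iic_laplacePDF_of_nonpos hb (neg_nonpos.2 ht), neg_div]

theorem setIntegral_Iic_laplacePDF (hb : 0 < b) (t : ℝ) :
    ∫ x in Iic t, laplacePDF b x = laplaceCDF b t := by
  rcases le_or_gt t 0 with ht | ht
  · rw [setIntegral_Iic_laplacePDF_of_nonpos hb ht, laplaceCDF, if_pos ht]
  · have hint := integrable_laplacePDF hb
    rw [laplaceCDF, if_neg ht.not_ge, ← setIntegral_Ioi_laplacePDF_of_nonneg hb ht.le,
      ← integral_laplacePDF hb, ← intervalIntegral.integral_Iic_add_Ioi hint.integrableOn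
      hint.integrableOn, add_sub_cancel_right]

theorem laplaceCDF_nonneg (hb : 0 < b) (t : ℝ) : 0 ≤ laplaceCDF b t := by
  rw [← setIntegral_Iic_laplacePDF hb]
  exact setIntegral_nonneg measurableSet_Iic fun x _ => laplacePDF_nonneg hb x

theorem laplaceCDF_le_one (hb : 0 < b) (t : ℝ) : laplaceCDF b t ≤ 1 := by
  rw [← setIntegral_Iic_laplacePDF hb, ← integral_laplacePDF hb]
  exact setIntegral_le_integral (integrable_laplacePDF hb)
    (Filter.Eventually.of_forall (laplacePDF_nonneg hb))

theorem laplaceMeasure_Iic (hb : 0 < b) (t : ℝ) :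
    laplaceMeasure b (Iic t) = ENNReal.ofReal (laplaceCDF b t) := by
  rw [laplaceMeasure, withDensity_apply _ measurableSet_Iic, ← setIntegral_Iic_laplacePDF hb,
    ofReal_integral_eq_lintegral_ofReal (integrable_laplacePDF hb).integrableOn
      (Filter.Eventually.of_forall (laplacePDF_nonneg hb))]

theorem integrable_laplacePDF_mul_laplaceCDF {a : ℝ} (ha : 0 < a) (hb : 0 < b) (C : ℝ) :
    Integrable fun x => laplacePDF a x * laplaceCDF b (x + C) :=
  (integrable_laplacePDF ha).mul_bdd
    (measurable_laplaceCDF.comp (measurable_add_const C)).aestronglyMeasurable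
    (Filter.Eventually.of_forall fun x => by
      rw [Real.norm_of_nonneg (laplaceCDF_nonneg hb _)]
      exact laplaceCDF_le_one hb _)

theorem setIntegral_Iic_laplacePDF_mul_laplaceCDF (hb : 0 < b) (hC : 0 ≤ C) :
    ∫ x in Iic (-C), laplacePDF (2 * b) x * laplaceCDF b (x + C) = exp (-C / (2 * b)) / 12 := by
  have heq : EqOn (fun x => laplacePDF (2 * b) x * laplaceCDF b (x + C))
      (fun x => exp (C / b) / (8 * b) * exp (3 / (2 * b) * x)) (Iic (-C)) := by
    intro x (hx : x ≤ -C)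
    dsimp only
    rw [laplacePDF_of_nonpos (by linarith), laplaceCDF, if_pos (by linarith),
      show 3 / (2 * b) * x = (2 * b)⁻¹ * x + (x + C) / b - C / b by field_simp; ring,
      exp_sub, exp_add]
    field_simp
    ring
  rw [setIntegral_congr_fun measurableSet_Iic heq, integral_const_mul,
    integral_exp_mul_Iic (by positivity),
    show 3 / (2 * b) * -C = -C / (2 * b) - C / b by field_simp; ring, exp_sub]
  field_simp
  ring

theorem intervalIntegral_laplacePDF_mul_laplaceCDF (hb : 0 < b) (hC : 0 ≤ C) :
    ∫ x in (-C)..0, laplacePDF (2 * b) x * laplaceCDF b (x + C) =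
      1 / 2 - 3 / 4 * exp (-C / (2 * b)) + 1 / 4 * exp (-C / b) := by
  have heq : EqOn (fun x => laplacePDF (2 * b) x * laplaceCDF b (x + C))
      (fun x => 1 / (4 * b) * exp ((2 * b)⁻¹ * x) - exp (-C / b) / (8 * b) * exp (-(2 * b)⁻¹ * x))
      (uIcc (-C) 0) := by
    intro x hx
    rw [uIcc_of_le (by linarith)] at hx
    dsimp only
    rw [laplacePDF_of_nonpos hx.2, laplaceCDF_of_nonneg (by linarith [hx.1]),
      show -(x + C) / b = -C / b + -(2 * b)⁻¹ * x - (2 * b)⁻¹ * x by field_simp; ring,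
      exp_sub, exp_add]
    field_simp
    ring
  rw [intervalIntegral.integral_congr heq, intervalIntegral.integral_sub
      ((by fun_prop : Continuous _).intervalIntegrable _ _)
      ((by fun_prop : Continuous _).intervalIntegrable _ _),
    intervalIntegral.integral_const_mul, intervalIntegral.integral_const_mul,
    integral_exp_mul (by positivity), integral_exp_mul (neg_ne_zero.2 (by positivity)),
    show -(2 * b)⁻¹ * -C = C / (2 * b) by field_simp,
    show -C / b = -C / (2 * b) - C / (2 * b) by ring, exp_sub, mul_zero, mul_zero, exp_zero]
  field_simp
  ring

theorem setIntegral_Ioi_laplacePDF_mul_laplaceCDF (hb : 0 < b) (hC : 0 ≤ C) :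
    ∫ x in Ioi 0, laplacePDF (2 * b) x * laplaceCDF b (x + C) = 1 / 2 - 1 / 12 * exp (-C / b) := by
  have heq : EqOn (fun x => laplacePDF (2 * b) x * laplaceCDF b (x + C))
      (fun x => 1 / (4 * b) * exp (-(2 * b)⁻¹ * x) -
        exp (-C / b) / (8 * b) * exp (-(3 / (2 * b)) * x)) (Ioi 0) := by
    intro x (hx : 0 < x)
    dsimp only
    rw [laplacePDF_of_nonneg hx.le, laplaceCDF_of_nonneg (by linarith),
      show -(x + C) / b = -C / b + -(3 / (2 * b)) * x - -(2 * b)⁻¹ * x by field_simp; ring,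
      exp_sub, exp_add]
    field_simp
    ring
  have hc₁ : -(2 * b)⁻¹ < 0 := neg_neg_of_pos (by positivity)
  have hc₃ : -(3 / (2 * b)) < 0 := neg_neg_of_pos (by positivity)
  rw [setIntegral_congr_fun measurableSet_Ioi heq,
    integral_sub ((integrableOn_exp_mul_Ioi hc₁ 0).const_mul _)
      ((integrableOn_exp_mul_Ioi hc₃ 0).const_mul _),
    integral_const_mul, integral_const_mul, integral_exp_mul_Ioi hc₁, integral_exp_mul_Ioi hc₃,
    mul_zero, mul_zero, exp_zero]
  field_simp
  ring

theorem integral_laplacePDF_mul_laplaceCDF (hb : 0 < b) (hC : 0 ≤ C) :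
    ∫ x, laplacePDF (2 * b) x * laplaceCDF b (x + C) =
      1 - 2 / 3 * exp (-C / (2 * b)) + 1 / 6 * exp (-C / b) := by
  have hint := integrable_laplacePDF_mul_laplaceCDF (by positivity : 0 < 2 * b) hb C
  rw [← intervalIntegral.integral_Iic_add_Ioi (b := -C) hint.integrableOn hint.integrableOn,
    ← intervalIntegral.integral_interval_add_Ioi (b := 0) hint.integrableOn hint.integrableOn,
    setIntegral_Iic_laplacePDF_mul_laplaceCDF hb hC,
    intervalIntegral_laplacePDF_mul_laplaceCDF hb hC,
    setIntegral_Ioi_laplacePDF_mul_laplaceCDF hb hC]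
  ring

end Laplace

theorem laplace_ge_diff_prob {Ω : Type*} [MeasurableSpace Ω] (P : Measure Ω)
    [IsProbabilityMeasure P] (b : ℝ) (hb : 0 < b) (Z₁ Z₂ : Ω → ℝ)
    (h₁ : HasLaplaceLaw P Z₁ (2 * b)) (h₂ : HasLaplaceLaw P Z₂ b)
    (hind : IndepFun Z₁ Z₂ P) (C : ℝ) (hC : 0 < C) :
    P {ω | Z₁ ω ≥ Z₂ ω - C} =
      ENNReal.ofReal
        (1 - (2 / 3) * Real.exp (-C / (2 * b)) + (1 / 6) * Real.exp (-C / b)) := by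
  obtain ⟨hZ₁, hlaw₁⟩ := hasLaplaceLaw_iff.mp h₁
  obtain ⟨hZ₂, hlaw₂⟩ := hasLaplaceLaw_iff.mp h₂
  simp_rw [ge_iff_le]
  rw [hind.measure_sub_le_eq_lintegral hZ₁ hZ₂, hlaw₁, hlaw₂]
  simp_rw [laplaceMeasure_Iic hb]
  rw [laplaceMeasure, lintegral_ofReal_withDensity_ofReal (g := fun x => laplaceCDF b (x + C))
      measurable_laplacePDF (laplacePDF_nonneg (by positivity))
      (measurable_laplaceCDF.comp (measurable_add_const C)) (fun x => laplaceCDF_nonneg hb _)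
      (integrable_laplacePDF_mul_laplaceCDF (by positivity) hb C),
    integral_laplacePDF_mul_laplaceCDF hb hC.le]
end

section
/- Let p be a random variable with values in (0,1] that is super-uniform, and let Z and Z_α be real random variables on the same probability space. Then for every α ∈ (0,1] and every A ≥ 0, P(log p + Z ≤ log α − A + Z_α) ≤ α + P(Z ≤ Z_α − A). -/
open MeasureTheory ProbabilityTheory Real

/-- A random variable `p` with values in `[0,1]` is super-uniform (with respect to the
probability measure `P`) if `P(p ≤ u) ≤ u` for every `u ∈ [0,1]`. -/
def SuperUniform {Ω : Type*} [MeasurableSpace Ω] (P : Measure Ω) (p : Ω → ℝ) : Prop :=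
  ∀ u : ℝ, 0 ≤ u → u ≤ 1 → P {ω | p ω ≤ u} ≤ ENNReal.ofReal u

theorem noisy_threshold_union_bound {Ω : Type*} [MeasurableSpace Ω] (P : Measure Ω)
    [IsProbabilityMeasure P] (p Z Zα : Ω → ℝ)
    (hp_meas : Measurable p) (hZ_meas : Measurable Z) (hZα_meas : Measurable Zα)
    (hp_range : ∀ ω, p ω ∈ Set.Ioc (0 : ℝ) 1) (hp_su : SuperUniform P p)
    (α : ℝ) (hα : α ∈ Set.Ioc (0 : ℝ) 1) (A : ℝ) (hA : 0 ≤ A) :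
    P {ω | Real.log (p ω) + Z ω ≤ Real.log α - A + Zα ω} ≤
      ENNReal.ofReal α + P {ω | Z ω ≤ Zα ω - A} := by
  have hsub : {ω | Real.log (p ω) + Z ω ≤ Real.log α - A + Zα ω} ⊆
      {ω | p ω ≤ α} ∪ {ω | Z ω ≤ Zα ω - A} := by
    intro ω hω
    simp only [Set.mem_setOf_eq] at hω
    by_cases hz : Z ω ≤ Zα ω - A
    · exact Or.inr hz
    · left
      push_neg at hz
      have hlog : Real.log (p ω) ≤ Real.log α := by linarith
      have := (hp_range ω).1
      exact Real.log_le_log_iff this hα.1 |>.mp hlog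
  calc P {ω | Real.log (p ω) + Z ω ≤ Real.log α - A + Zα ω}
      ≤ P ({ω | p ω ≤ α} ∪ {ω | Z ω ≤ Zα ω - A}) := measure_mono hsub
    _ ≤ P {ω | p ω ≤ α} + P {ω | Z ω ≤ Zα ω - A} := measure_union_le _ _
    _ ≤ ENNReal.ofReal α + P {ω | Z ω ≤ Zα ω - A} := by
        gcongr
        exact hp_su α hα.1.le hα.2
end

section
/- Let (Ω, F, P) be a probability space, let G ⊆ F be a sub-σ-algebra, and let p be a random variable with values in (0,1] such that for every G-measurable random variable a with values in [0,1], P(p ≤ a | G) ≤ a almost surely. Let α and λ be G-measurable random variables with α taking values in [0,1] and λ taking values in [0, 1/2). Then E[α·𝟙{p > 2λ}/(1 − 2λ)] ≥ E[α] (where the expectations of these nonnegative quantities are taken in [0,∞]). -/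
open MeasureTheory ProbabilityTheory Real ENNReal

lemma core_mul_le {Ω : Type*} {F : MeasurableSpace Ω} (P : Measure Ω) (G : MeasurableSpace Ω)
    (hG : G ≤ F) (X a : Ω → ℝ≥0∞) (hX : Measurable[F] X) (ha : Measurable[G] a)
    (hle : ∀ A, MeasurableSet[G] A → ∫⁻ ω in A, X ω ∂P ≤ ∫⁻ ω in A, a ω ∂P)
    (h : Ω → ℝ≥0∞) (hh : Measurable[G] h) :
    ∫⁻ ω, h ω * X ω ∂P ≤ ∫⁻ ω, h ω * a ω ∂P := by
  have hμ : (P.withDensity X).trim hG ≤ (P.withDensity a).trim hG := by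
    rw [Measure.le_iff]
    intro s hs
    rw [trim_measurableSet_eq hG hs, trim_measurableSet_eq hG hs,
      withDensity_apply _ (hG s hs), withDensity_apply _ (hG s hs)]
    exact hle s hs
  have h1 : ∫⁻ ω, h ω * X ω ∂P = ∫⁻ ω, h ω ∂((P.withDensity X).trim hG) := by
    rw [lintegral_trim hG hh, lintegral_withDensity_eq_lintegral_mul P hX (hh.mono hG le_rfl)]
    simp_rw [Pi.mul_apply, mul_comm]
  have h2 : ∫⁻ ω, h ω * a ω ∂P = ∫⁻ ω, h ω ∂((P.withDensity a).trim hG) := by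
    rw [lintegral_trim hG hh,
      lintegral_withDensity_eq_lintegral_mul P (ha.mono hG le_rfl) (hh.mono hG le_rfl)]
    simp_rw [Pi.mul_apply, mul_comm]
  rw [h1, h2]
  exact lintegral_mono' hμ le_rfl

lemma aux_setLintegral_le {Ω : Type*} (G : MeasurableSpace Ω) {F : MeasurableSpace Ω}
    (hG : G ≤ F) (P : Measure Ω) [IsProbabilityMeasure P]
    (s : Set Ω) (hsF : MeasurableSet[F] s) (a : Ω → ℝ) (ha_meas : Measurable[G] a)
    (ha_range : ∀ ω, a ω ∈ Set.Icc (0 : ℝ) 1)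
    (hce : ∀ᵐ ω ∂P, (P[s.indicator (fun _ => (1 : ℝ)) | G]) ω ≤ a ω)
    (A : Set Ω) (hA : MeasurableSet[G] A) :
    ∫⁻ ω in A, ENNReal.ofReal (s.indicator (fun _ => (1 : ℝ)) ω) ∂P ≤
      ∫⁻ ω in A, ENNReal.ofReal (a ω) ∂P := by
  set Xr : Ω → ℝ := s.indicator (fun _ => (1 : ℝ)) with hXr_def
  have hXr_int : Integrable Xr P := (integrable_const (1 : ℝ)).indicator hsF
  have hXr_nonneg : ∀ ω, 0 ≤ Xr ω := fun ω => Set.indicator_nonneg (fun _ _ => zero_le_one) ω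
  have ha_int : Integrable a P := by
    refine Integrable.mono' (integrable_const (1 : ℝ))
      (ha_meas.mono hG le_rfl).aestronglyMeasurable ?_
    filter_upwards with ω
    rw [Real.norm_eq_abs, abs_of_nonneg (ha_range ω).1]
    exact (ha_range ω).2
  have hle_real : ∫ ω in A, Xr ω ∂P ≤ ∫ ω in A, a ω ∂P := by
    rw [← setIntegral_condExp hG hXr_int hA]
    exact setIntegral_mono_ae (integrable_condExp.restrict) (ha_int.restrict) hce
  rw [← ofReal_integral_eq_lintegral_ofReal hXr_int.restrict
      (Filter.Eventually.of_forall hXr_nonneg),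
    ← ofReal_integral_eq_lintegral_ofReal ha_int.restrict
      (Filter.Eventually.of_forall fun ω => (ha_range ω).1)]
  exact ENNReal.ofReal_le_ofReal hle_real

theorem compensator_inequality {Ω : Type*} (G : MeasurableSpace Ω) {F : MeasurableSpace Ω} (P : Measure Ω)
    [IsProbabilityMeasure P] (hG : G ≤ F)
    (p : Ω → ℝ) (hp_meas : Measurable p) (hp_range : ∀ ω, p ω ∈ Set.Ioc (0 : ℝ) 1)
    -- conditional super-uniformity: for every `G`-measurable `a` with values in `[0,1]`,
    -- `P(p ≤ a | G) ≤ a` almost surely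
    (hp_su : ∀ a : Ω → ℝ, Measurable[G] a → (∀ ω, a ω ∈ Set.Icc (0 : ℝ) 1) →
      ∀ᵐ ω ∂P, (P[Set.indicator {ω' | p ω' ≤ a ω'} (fun _ => (1 : ℝ)) | G]) ω ≤ a ω)
    (α lam : Ω → ℝ) (hα_meas : Measurable[G] α) (hlam_meas : Measurable[G] lam)
    (hα_range : ∀ ω, α ω ∈ Set.Icc (0 : ℝ) 1)
    (hlam_range : ∀ ω, lam ω ∈ Set.Ico (0 : ℝ) (1 / 2)) :
    ∫⁻ ω, ENNReal.ofReal (α ω * (if 2 * lam ω < p ω then (1 : ℝ) else 0) / (1 - 2 * lam ω)) ∂P ≥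
      ∫⁻ ω, ENNReal.ofReal (α ω) ∂P := by
  have hden : ∀ ω, 0 < 1 - 2 * lam ω := by
    intro ω
    have := (hlam_range ω).2
    linarith
  set a : Ω → ℝ := fun ω => 2 * lam ω with ha_def
  have ha_meas : Measurable[G] a := hlam_meas.const_mul 2
  have ha_range : ∀ ω, a ω ∈ Set.Icc (0 : ℝ) 1 := by
    intro ω
    have h1 := (hlam_range ω).1
    have h2 := (hlam_range ω).2
    constructor <;> simp only [ha_def] <;> linarith
  have hce := hp_su a ha_meas ha_range
  set s : Set Ω := {ω' | p ω' ≤ a ω'} with hs_def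
  have hsF : MeasurableSet[F] s := measurableSet_le hp_meas (ha_meas.mono hG le_rfl)
  set Xr : Ω → ℝ := s.indicator (fun _ => (1 : ℝ)) with hXr_def
  have hc1 : Measurable[F] (fun _ : Ω => (1 : ℝ)) := measurable_const
  have hXr_meas : Measurable[F] Xr := hc1.indicator hsF
  set X' : Ω → ℝ≥0∞ := fun ω => ENNReal.ofReal (Xr ω) with hX'_def
  set a' : Ω → ℝ≥0∞ := fun ω => ENNReal.ofReal (a ω) with ha'_def
  have hX' : Measurable[F] X' := ENNReal.measurable_ofReal.comp hXr_meas
  have ha' : Measurable[G] a' := ENNReal.measurable_ofReal.comp ha_meas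
  have hle : ∀ A, MeasurableSet[G] A → ∫⁻ ω in A, X' ω ∂P ≤ ∫⁻ ω in A, a' ω ∂P :=
    fun A hA => aux_setLintegral_le G hG P s hsF a ha_meas ha_range hce A hA
  -- truncation sets
  set S : ℕ → Set Ω := fun n => lam ⁻¹' Set.Iic (1/2 - 1/(n+1)) with hS_def
  have hS_meas : ∀ n, MeasurableSet[G] (S n) := fun n => hlam_meas measurableSet_Iic
  have hS_mono : Monotone S := by
    intro n m hnm ω hω
    simp only [hS_def, Set.mem_preimage, Set.mem_Iic] at *
    have : (1 : ℝ)/(m+1) ≤ 1/(n+1) := by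
      apply one_div_le_one_div_of_le
      · positivity
      · exact_mod_cast by exact_mod_cast add_le_add_left (Nat.cast_le.mpr hnm) 1
    linarith
  set h : ℕ → Ω → ℝ≥0∞ :=
    fun n => (S n).indicator (fun ω => ENNReal.ofReal (α ω / (1 - 2 * lam ω))) with hh_def
  have hh_meas : ∀ n, Measurable[G] (h n) := by
    intro n
    exact (ENNReal.measurable_ofReal.comp
      (hα_meas.div ((measurable_const.sub (hlam_meas.const_mul 2))))).indicator (hS_meas n)
  set t : Ω → ℝ≥0∞ :=
    fun ω => ENNReal.ofReal (α ω * (if 2 * lam ω < p ω then (1 : ℝ) else 0) / (1 - 2 * lam ω))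
    with ht_def
  have ht_measG : Measurable[F] t := by
    apply ENNReal.measurable_ofReal.comp
    apply Measurable.div
    · exact (hα_meas.mono hG le_rfl).mul
        (Measurable.ite (measurableSet_lt ((hlam_meas.mono hG le_rfl).const_mul 2) hp_meas)
          measurable_const measurable_const)
    · exact measurable_const.sub ((hlam_meas.mono hG le_rfl).const_mul 2)
  have ht_meas : Measurable[F] t := ht_measG
  -- key pointwise identities
  have hid1 : ∀ n ω, (S n).indicator t ω + h n ω * X' ω = h n ω := by
    intro n ω
    by_cases hω : ω ∈ S n
    · rw [Set.indicator_of_mem hω, hh_def]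
      simp only [Set.indicator_of_mem hω]
      by_cases hc : 2 * lam ω < p ω
      · have hns : ω ∉ s := by
          simp only [hs_def, Set.mem_setOf_eq, ha_def, not_le]
          exact hc
        simp only [ht_def, hX'_def, hXr_def, Set.indicator_of_notMem hns, if_pos hc,
          ENNReal.ofReal_zero, mul_zero, add_zero, mul_one]
      · have hins : ω ∈ s := by
          simp only [hs_def, Set.mem_setOf_eq, ha_def]
          linarith [not_lt.mp hc]
        simp only [ht_def, hX'_def, hXr_def, Set.indicator_of_mem hins, if_neg hc,
          ENNReal.ofReal_one, mul_one, mul_zero, zero_div, ENNReal.ofReal_zero, zero_add]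
    · simp [Set.indicator_of_notMem hω, hh_def]
  have hid2 : ∀ n ω, h n ω * a' ω + (S n).indicator (fun ω => ENNReal.ofReal (α ω)) ω = h n ω := by
    intro n ω
    by_cases hω : ω ∈ S n
    · rw [hh_def]
      simp only [Set.indicator_of_mem hω, ha'_def, ha_def]
      have hnn : (0:ℝ) ≤ α ω / (1 - 2 * lam ω) := div_nonneg (hα_range ω).1 (hden ω).le
      rw [← ENNReal.ofReal_mul hnn,
        ← ENNReal.ofReal_add (mul_nonneg hnn (by linarith [(hlam_range ω).1])) (hα_range ω).1]
      congr 1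
      have hd := hden ω
      field_simp
      ring
    · simp [Set.indicator_of_notMem hω, hh_def]
  -- finiteness
  have hfin : ∀ n, ∫⁻ ω, h n ω ∂P ≠ ⊤ := by
    intro n
    have hb : ∀ ω, h n ω ≤ ENNReal.ofReal ((n+1)/2) := by
      intro ω
      by_cases hω : ω ∈ S n
      · rw [hh_def]
        simp only [Set.indicator_of_mem hω]
        apply ENNReal.ofReal_le_ofReal
        have hωS : lam ω ≤ 1/2 - 1/(n+1) := hω
        have hn1 : (0:ℝ) < 1/(n+1) := by positivity
        have hd : (2:ℝ)/(n+1) ≤ 1 - 2 * lam ω := by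
          have h2 : (2:ℝ)/(n+1) = 2 * (1/(n+1)) := by ring
          linarith
        have hd0 : (0:ℝ) < 2/(n+1) := by positivity
        calc α ω / (1 - 2 * lam ω) ≤ 1 / (2/(n+1)) := by
              apply div_le_div₀ (by norm_num) (hα_range ω).2 hd0 hd
          _ = (n+1)/2 := by field_simp
      · rw [hh_def]
        simp [Set.indicator_of_notMem hω]
    exact ne_top_of_le_ne_top (by simp) (lintegral_mono hb)
  -- per-n inequality
  have hkey : ∀ n, ∫⁻ ω, (S n).indicator (fun ω => ENNReal.ofReal (α ω)) ω ∂P ≤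
      ∫⁻ ω, t ω ∂P := by
    intro n
    have hE1 : ∫⁻ ω, (S n).indicator t ω ∂P + ∫⁻ ω, h n ω * X' ω ∂P = ∫⁻ ω, h n ω ∂P := by
      rw [← lintegral_add_left (ht_meas.indicator (hG _ (hS_meas n)))]
      exact lintegral_congr (hid1 n)
    have hE2 : ∫⁻ ω, h n ω * a' ω ∂P +
        ∫⁻ ω, (S n).indicator (fun ω => ENNReal.ofReal (α ω)) ω ∂P = ∫⁻ ω, h n ω ∂P := by
      rw [← lintegral_add_left (f := fun ω => h n ω * a' ω) (((hh_meas n).mono hG le_rfl).mul (ha'.mono hG le_rfl))]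
      exact lintegral_congr (hid2 n)
    have hBC : ∫⁻ ω, h n ω * X' ω ∂P ≤ ∫⁻ ω, h n ω * a' ω ∂P :=
      core_mul_le P G hG X' a' hX' ha' hle (h n) (hh_meas n)
    have hBfin : ∫⁻ ω, h n ω * X' ω ∂P ≠ ⊤ := by
      refine ne_top_of_le_ne_top (hfin n) (lintegral_mono fun ω => ?_)
      calc h n ω * X' ω ≤ h n ω * 1 := by
            apply mul_le_mul_right
            rw [hX'_def]
            calc ENNReal.ofReal (Xr ω) ≤ ENNReal.ofReal 1 := by
                  apply ENNReal.ofReal_le_ofReal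
                  rw [hXr_def]
                  by_cases hω : ω ∈ s <;> simp [hω]
              _ = 1 := ENNReal.ofReal_one
        _ = h n ω := mul_one _
    have hchain : ∫⁻ ω, (S n).indicator (fun ω => ENNReal.ofReal (α ω)) ω ∂P +
        ∫⁻ ω, h n ω * X' ω ∂P ≤ ∫⁻ ω, (S n).indicator t ω ∂P + ∫⁻ ω, h n ω * X' ω ∂P := by
      rw [hE1]
      calc _ ≤ ∫⁻ ω, (S n).indicator (fun ω => ENNReal.ofReal (α ω)) ω ∂P +
            ∫⁻ ω, h n ω * a' ω ∂P := add_le_add_right hBC _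
        _ = ∫⁻ ω, h n ω ∂P := by rw [add_comm]; exact hE2
    have h1 := (ENNReal.add_le_add_iff_right hBfin).mp hchain
    calc ∫⁻ ω, (S n).indicator (fun ω => ENNReal.ofReal (α ω)) ω ∂P
        ≤ ∫⁻ ω, (S n).indicator t ω ∂P := h1
      _ ≤ ∫⁻ ω, t ω ∂P := lintegral_mono fun ω => Set.indicator_le_self _ _ ω
  -- take supremum
  have hsup : ∫⁻ ω, ENNReal.ofReal (α ω) ∂P =
      ⨆ n, ∫⁻ ω, (S n).indicator (fun ω => ENNReal.ofReal (α ω)) ω ∂P := by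
    rw [← lintegral_iSup]
    · apply lintegral_congr
      intro ω
      have hex : ∃ n : ℕ, ω ∈ S n := by
        have hlt : 0 < 1/2 - lam ω := by linarith [(hlam_range ω).2]
        obtain ⟨n, hn⟩ := exists_nat_one_div_lt hlt
        refine ⟨n, ?_⟩
        simp only [hS_def, Set.mem_preimage, Set.mem_Iic]
        push_cast at hn ⊢
        linarith
      obtain ⟨n, hn⟩ := hex
      apply le_antisymm
      · calc ENNReal.ofReal (α ω)
            = (S n).indicator (fun ω => ENNReal.ofReal (α ω)) ω := by
              rw [Set.indicator_of_mem hn]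
          _ ≤ _ := le_iSup (fun n => (S n).indicator (fun ω => ENNReal.ofReal (α ω)) ω) n
      · exact iSup_le fun m => Set.indicator_le_self _ _ ω
    · intro n
      exact (ENNReal.measurable_ofReal.comp (hα_meas.mono hG le_rfl)).indicator
        (hG _ (hS_meas n))
    · intro i j hij ω
      exact Set.indicator_le_indicator_of_subset (hS_mono hij) (fun _ => zero_le) ω
  rw [ge_iff_le, hsup]
  exact iSup_le hkey
end

section
/- Let p be a random variable with values in (0,1] that is super-uniform, and let (Z, Z_α) be a pair of real random variables independent of p. Then for every constant α ∈ (0,1] and every A ∈ ℝ, P(log p + Z ≤ log α + Z_α − A) ≤ E[min{α·exp(Z_α − Z − A), 1}]. -/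
open MeasureTheory ProbabilityTheory Real

theorem noisy_threshold_min_bound {Ω : Type*} [MeasurableSpace Ω] (P : Measure Ω)
    [IsProbabilityMeasure P] (p Z Zα : Ω → ℝ)
    (hp_meas : Measurable p) (hZ_meas : Measurable Z) (hZα_meas : Measurable Zα)
    (hp_range : ∀ ω, p ω ∈ Set.Ioc (0 : ℝ) 1) (hp_su : SuperUniform P p)
    (hind : IndepFun p (fun ω => (Z ω, Zα ω)) P)
    (α : ℝ) (hα : α ∈ Set.Ioc (0 : ℝ) 1) (A : ℝ) :
    P {ω | Real.log (p ω) + Z ω ≤ Real.log α + Zα ω - A} ≤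
      ∫⁻ ω, ENNReal.ofReal (min (α * Real.exp (Zα ω - Z ω - A)) 1) ∂P := by
  set W : Ω → ℝ × ℝ := fun ω => (Z ω, Zα ω) with hW
  have hW_meas : Measurable W := hZ_meas.prodMk hZα_meas
  set g : ℝ × ℝ → ℝ := fun w => α * Real.exp (w.2 - w.1 - A) with hg
  have hg_meas : Measurable g :=
    measurable_const.mul ((measurable_snd.sub measurable_fst).sub measurable_const).exp
  have hg_pos : ∀ w, 0 < g w := fun w => mul_pos hα.1 (Real.exp_pos _)
  -- rewrite the event
  have hevent : {ω | Real.log (p ω) + Z ω ≤ Real.log α + Zα ω - A} =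
      (fun ω => (W ω, p ω)) ⁻¹' {q : (ℝ × ℝ) × ℝ | q.2 ≤ g q.1} := by
    ext ω
    have hpω := (hp_range ω).1
    simp only [Set.mem_setOf_eq, Set.mem_preimage, hW, hg]
    rw [show Real.log α + Zα ω - A = Real.log (α * Real.exp (Zα ω - Z ω - A)) + Z ω by
      rw [Real.log_mul (ne_of_gt hα.1) (Real.exp_ne_zero _), Real.log_exp]; ring]
    rw [add_le_add_iff_right, Real.log_le_log_iff hpω (mul_pos hα.1 (Real.exp_pos _))]
  have hS : MeasurableSet {q : (ℝ × ℝ) × ℝ | q.2 ≤ g q.1} :=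
    measurableSet_le measurable_snd (hg_meas.comp measurable_fst)
  have hmap : P.map (fun ω => (W ω, p ω)) = (P.map W).prod (P.map p) :=
    (indepFun_iff_map_prod_eq_prod_map_map hW_meas.aemeasurable
      hp_meas.aemeasurable).mp hind.symm
  calc P {ω | Real.log (p ω) + Z ω ≤ Real.log α + Zα ω - A}
      = (P.map (fun ω => (W ω, p ω))) {q : (ℝ × ℝ) × ℝ | q.2 ≤ g q.1} := by
        rw [Measure.map_apply (hW_meas.prodMk hp_meas) hS, hevent]
    _ = ∫⁻ w, (P.map p) {x | x ≤ g w} ∂(P.map W) := by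
        rw [hmap, Measure.prod_apply hS]
        rfl
    _ ≤ ∫⁻ w, ENNReal.ofReal (min (g w) 1) ∂(P.map W) := by
        refine lintegral_mono fun w => ?_
        have hmp : (P.map p) {x | x ≤ g w} = P {ω | p ω ≤ g w} := by
          have : {x : ℝ | x ≤ g w} = Set.Iic (g w) := rfl
          rw [this, Measure.map_apply hp_meas measurableSet_Iic]
          rfl
        rcases le_or_gt (g w) 1 with h1 | h1
        · rw [min_eq_left h1, hmp]
          exact hp_su (g w) (hg_pos w).le h1
        · rw [min_eq_right h1.le, ENNReal.ofReal_one, hmp]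
          calc P {ω | p ω ≤ g w} ≤ P Set.univ := measure_mono (Set.subset_univ _)
            _ = 1 := measure_univ
    _ = ∫⁻ ω, ENNReal.ofReal (min (α * Real.exp (Zα ω - Z ω - A)) 1) ∂P := by
        rw [lintegral_map (by
          exact ((hg_meas.min measurable_const).ennreal_ofReal)) hW_meas]
end

section
/- Let (Ω, F, P) be a probability space with a filtration (F_t)_{t≥0}, let p₁, …, p_k be random variables with values in (0,1], and let H₀ ⊆ {1,…,k}. For each t ≤ k, let α_t and λ_t be F_{t−1}-measurable random variables with values in (0,1), define R_t = 𝟙{p_t ≤ α_t} and C_t = 𝟙{p_t ≤ λ_t}, and assume R_t and C_t are F_t-measurable. Assume that for every j ∈ H₀ and every F_{j−1}-measurable random variable a with values in [0,1], P(p_j ≤ a | F_{j−1}) ≤ a almost surely. Then for every t ≤ k, E[Σ_{j≤t, j∈H₀} α_j·𝟙{p_j > λ_j}/(1 − λ_j)] ≥ E[Σ_{j≤t, j∈H₀} R_j]. -/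
open MeasureTheory ProbabilityTheory Real
open scoped ENNReal

/-! For a null index `j`, super-uniformity at level `α_j` gives `E[R_j] ≤ E[α_j]`, and at level
`λ_j` it gives `E[1 - C_j | F_{j-1}] ≥ 1 - λ_j`; weighting by the `F_{j-1}`-measurable factor
`α_j / (1 - λ_j)` turns the latter into `E[α_j] ≤ E[α_j (1 - C_j) / (1 - λ_j)]`. Summing over the
null indices up to `t` gives the bound. The weight need not be integrable, so the weighting step
compares, on the sets of `F_{j-1}`, the measures with densities `1 - λ_j` and `1 - C_j`, and
integrates the weight against them as lower Lebesgue integrals. -/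

section

variable {Ω : Type*} {m m₀ : MeasurableSpace Ω} {μ : Measure Ω}

lemma lintegral_ofReal_le_lintegral_ofReal_of_integral_le {f g : Ω → ℝ}
    (hf : Integrable f μ) (hg : Integrable g μ) (hf0 : 0 ≤ᵐ[μ] f) (hg0 : 0 ≤ᵐ[μ] g)
    (hfg : ∫ x, f x ∂μ ≤ ∫ x, g x ∂μ) :
    ∫⁻ x, ENNReal.ofReal (f x) ∂μ ≤ ∫⁻ x, ENNReal.ofReal (g x) ∂μ := by
  rw [← ofReal_integral_eq_lintegral_ofReal hf hf0, ← ofReal_integral_eq_lintegral_ofReal hg hg0]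
  exact ENNReal.ofReal_le_ofReal hfg

lemma lintegral_ofReal_sum_le_lintegral_ofReal_sum {ι : Type*} (s : Finset ι) {f g : ι → Ω → ℝ}
    (hf : ∀ i ∈ s, AEMeasurable (f i) μ) (hg : ∀ i ∈ s, AEMeasurable (g i) μ)
    (hf0 : ∀ i ∈ s, ∀ x, 0 ≤ f i x) (hg0 : ∀ i ∈ s, ∀ x, 0 ≤ g i x)
    (hfg : ∀ i ∈ s, ∫⁻ x, ENNReal.ofReal (f i x) ∂μ ≤ ∫⁻ x, ENNReal.ofReal (g i x) ∂μ) :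
    ∫⁻ x, ENNReal.ofReal (∑ i ∈ s, f i x) ∂μ ≤ ∫⁻ x, ENNReal.ofReal (∑ i ∈ s, g i x) ∂μ := by
  rw [lintegral_congr fun x => ENNReal.ofReal_sum_of_nonneg fun i hi => hf0 i hi x,
    lintegral_congr fun x => ENNReal.ofReal_sum_of_nonneg fun i hi => hg0 i hi x,
    lintegral_finsetSum' s fun i hi => (hf i hi).ennreal_ofReal,
    lintegral_finsetSum' s fun i hi => (hg i hi).ennreal_ofReal]
  exact Finset.sum_le_sum hfg

lemma setIntegral_le_setIntegral_of_condExp_le (hm : m ≤ m₀) [SigmaFinite (μ.trim hm)]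
    {f g : Ω → ℝ} {s : Set Ω} (hf : Integrable f μ) (hg : Integrable g μ)
    (hfg : μ[f | m] ≤ᵐ[μ] g) (hs : MeasurableSet[m] s) :
    ∫ x in s, f x ∂μ ≤ ∫ x in s, g x ∂μ := by
  rw [← setIntegral_condExp hm hf hs]
  exact setIntegral_mono_ae integrable_condExp.integrableOn hg.integrableOn hfg

lemma lintegral_ofReal_le_lintegral_ofReal_of_condExp_le (hm : m ≤ m₀) [SigmaFinite (μ.trim hm)]
    {f g : Ω → ℝ} (hf : Integrable f μ) (hg : Integrable g μ) (hf0 : 0 ≤ᵐ[μ] f)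
    (hg0 : 0 ≤ᵐ[μ] g) (hfg : μ[f | m] ≤ᵐ[μ] g) :
    ∫⁻ x, ENNReal.ofReal (f x) ∂μ ≤ ∫⁻ x, ENNReal.ofReal (g x) ∂μ :=
  lintegral_ofReal_le_lintegral_ofReal_of_integral_le hf hg hf0 hg0 <|
    (integral_condExp hm).symm.le.trans (integral_mono_ae integrable_condExp hg hfg)

lemma lintegral_mul_le_lintegral_mul_of_setLIntegral_le (hm : m ≤ m₀) {f g h : Ω → ℝ≥0∞}
    (hf : AEMeasurable f μ) (hg : AEMeasurable g μ) (hh : Measurable[m] h)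
    (hfg : ∀ s, MeasurableSet[m] s → ∫⁻ x in s, f x ∂μ ≤ ∫⁻ x in s, g x ∂μ) :
    ∫⁻ x, f x * h x ∂μ ≤ ∫⁻ x, g x * h x ∂μ := by
  have htrim : (μ.withDensity f).trim hm ≤ (μ.withDensity g).trim hm := by
    refine Measure.le_iff.2 fun s hs => ?_
    rw [trim_measurableSet_eq hm hs, trim_measurableSet_eq hm hs,
      withDensity_apply _ (hm s hs), withDensity_apply _ (hm s hs)]
    exact hfg s hs
  have hh₀ : AEMeasurable h μ := (hh.mono hm le_rfl).aemeasurable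
  calc ∫⁻ x, f x * h x ∂μ = ∫⁻ x, h x ∂(μ.withDensity f).trim hm := by
        rw [lintegral_trim hm hh, lintegral_withDensity_eq_lintegral_mul₀ hf hh₀]; rfl
    _ ≤ ∫⁻ x, h x ∂(μ.withDensity g).trim hm := lintegral_mono' htrim le_rfl
    _ = ∫⁻ x, g x * h x ∂μ := by
        rw [lintegral_trim hm hh, lintegral_withDensity_eq_lintegral_mul₀ hg hh₀]; rfl

variable [IsFiniteMeasure μ]

lemma setLIntegral_ofReal_one_sub_le_of_condExp_indicator_le (hm : m ≤ m₀) {A s : Set Ω}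
    {c : Ω → ℝ} (hA : MeasurableSet A) (hc : Integrable c μ) (hc1 : ∀ x, c x ≤ 1)
    (hAc : μ[A.indicator (fun _ => 1) | m] ≤ᵐ[μ] c) (hs : MeasurableSet[m] s) :
    ∫⁻ x in s, ENNReal.ofReal (1 - c x) ∂μ ≤
      ∫⁻ x in s, ENNReal.ofReal (Aᶜ.indicator (fun _ => 1) x) ∂μ := by
  have hA1 : Integrable (A.indicator fun _ => (1 : ℝ)) μ := (integrable_const 1).indicator hA
  have hle := setIntegral_le_setIntegral_of_condExp_le hm hA1 hc hAc hs
  refine lintegral_ofReal_le_lintegral_ofReal_of_integral_le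
    ((integrable_const 1).sub hc).integrableOn
    ((integrable_const 1).indicator hA.compl).integrableOn
    (ae_of_all _ fun x => sub_nonneg.2 (hc1 x)) (ae_of_all _ fun x => ?_) ?_
  · exact Set.indicator_nonneg (fun _ _ => zero_le_one) x
  rw [Set.indicator_compl, integral_sub (integrable_const 1).integrableOn hc.integrableOn,
    Pi.sub_def, integral_sub (integrable_const 1).integrableOn hA1.integrableOn]
  linarith

lemma lintegral_ofReal_le_lintegral_ofReal_mul_indicator_compl_div (hm : m ≤ m₀)
    {a c : Ω → ℝ} {A : Set Ω} (ha : Measurable[m] a) (hc : Measurable[m] c)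
    (hc0 : ∀ x, 0 ≤ c x) (hc1 : ∀ x, c x < 1) (hA : MeasurableSet A)
    (hAc : μ[A.indicator (fun _ => 1) | m] ≤ᵐ[μ] c) :
    ∫⁻ x, ENNReal.ofReal (a x) ∂μ ≤
      ∫⁻ x, ENNReal.ofReal (a x * Aᶜ.indicator (fun _ => 1) x / (1 - c x)) ∂μ := by
  have hc₀ : Measurable c := hc.mono hm le_rfl
  have hc_int : Integrable c μ := Integrable.of_bound hc₀.aestronglyMeasurable 1
    (ae_of_all _ fun x => by rw [Real.norm_eq_abs, abs_of_nonneg (hc0 x)]; exact (hc1 x).le)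
  have hpos : ∀ x, 0 < 1 - c x := fun x => sub_pos.2 (hc1 x)
  have hw : Measurable[m] fun x => ENNReal.ofReal (a x / (1 - c x)) :=
    (ha.div (measurable_const.sub hc)).ennreal_ofReal
  calc ∫⁻ x, ENNReal.ofReal (a x) ∂μ
      = ∫⁻ x, ENNReal.ofReal (1 - c x) * ENNReal.ofReal (a x / (1 - c x)) ∂μ := by
        refine lintegral_congr fun x => ?_
        rw [← ENNReal.ofReal_mul (hpos x).le, mul_div_cancel₀ _ (hpos x).ne']
    _ ≤ ∫⁻ x, ENNReal.ofReal (Aᶜ.indicator (fun _ => 1) x) *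
          ENNReal.ofReal (a x / (1 - c x)) ∂μ :=
        lintegral_mul_le_lintegral_mul_of_setLIntegral_le hm
          (measurable_const.sub hc₀).ennreal_ofReal.aemeasurable
          (measurable_const.indicator hA.compl).ennreal_ofReal.aemeasurable hw
          fun s hs => setLIntegral_ofReal_one_sub_le_of_condExp_indicator_le hm hA hc_int
            (fun x => (hc1 x).le) hAc hs
    _ = ∫⁻ x, ENNReal.ofReal (a x * Aᶜ.indicator (fun _ => 1) x / (1 - c x)) ∂μ := by
        refine lintegral_congr fun x => ?_
        rw [← ENNReal.ofReal_mul (Set.indicator_nonneg (fun _ _ => zero_le_one) x)]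
        congr 1
        ring

lemma lintegral_ite_le_le_lintegral_mul_ite_lt_div (hm : m ≤ m₀) {q a c : Ω → ℝ}
    (hq : Measurable q) (ha : Measurable[m] a) (hc : Measurable[m] c)
    (ha01 : ∀ x, a x ∈ Set.Icc 0 1) (hc01 : ∀ x, c x ∈ Set.Ico 0 1)
    (hqa : μ[{x | q x ≤ a x}.indicator (fun _ => 1) | m] ≤ᵐ[μ] a)
    (hqc : μ[{x | q x ≤ c x}.indicator (fun _ => 1) | m] ≤ᵐ[μ] c) :
    ∫⁻ x, ENNReal.ofReal (if q x ≤ a x then 1 else 0) ∂μ ≤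
      ∫⁻ x, ENNReal.ofReal (a x * (if c x < q x then 1 else 0) / (1 - c x)) ∂μ := by
  have ha₀ : Measurable a := ha.mono hm le_rfl
  have hc₀ : Measurable c := hc.mono hm le_rfl
  have ha_int : Integrable a μ := Integrable.of_bound ha₀.aestronglyMeasurable 1
    (ae_of_all _ fun x => by rw [Real.norm_eq_abs, abs_of_nonneg (ha01 x).1]; exact (ha01 x).2)
  calc ∫⁻ x, ENNReal.ofReal (if q x ≤ a x then 1 else 0) ∂μ
      = ∫⁻ x, ENNReal.ofReal ({x | q x ≤ a x}.indicator (fun _ => 1) x) ∂μ := by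
        simp only [Set.indicator_apply, Set.mem_ofPred_eq]
    _ ≤ ∫⁻ x, ENNReal.ofReal (a x) ∂μ :=
        lintegral_ofReal_le_lintegral_ofReal_of_condExp_le hm
          ((integrable_const 1).indicator (measurableSet_le hq ha₀)) ha_int
          (ae_of_all _ (Set.indicator_nonneg fun _ _ => zero_le_one))
          (ae_of_all _ fun x => (ha01 x).1) hqa
    _ ≤ ∫⁻ x, ENNReal.ofReal (a x * {x | q x ≤ c x}ᶜ.indicator (fun _ => 1) x / (1 - c x)) ∂μ :=
        lintegral_ofReal_le_lintegral_ofReal_mul_indicator_compl_div hm ha hc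
          (fun x => (hc01 x).1) (fun x => (hc01 x).2) (measurableSet_le hq hc₀) hqc
    _ = _ := by simp only [Set.indicator_apply, Set.mem_compl_iff, Set.mem_ofPred_eq, not_le]

end

theorem saffron_false_rejection_bound_general {Ω : Type*} {F : MeasurableSpace Ω} (P : Measure Ω)
    [IsProbabilityMeasure P] (ℱ : Filtration ℕ F) (k : ℕ)
    (p : ℕ → Ω → ℝ) (hp_meas : ∀ j, Measurable (p j))
    (H₀ : Finset ℕ)
    (αf lamf : ℕ → Ω → ℝ)
    (hαf_meas : ∀ j, Measurable[ℱ (j - 1)] (αf j))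
    (hlamf_meas : ∀ j, Measurable[ℱ (j - 1)] (lamf j))
    (hαf_range : ∀ j ω, αf j ω ∈ Set.Ioo (0 : ℝ) 1)
    (hlamf_range : ∀ j ω, lamf j ω ∈ Set.Ioo (0 : ℝ) 1)
    -- conditional super-uniformity of the null p-values
    (h_su : ∀ j ∈ H₀, ∀ a : Ω → ℝ, Measurable[ℱ (j - 1)] a →
      (∀ ω, a ω ∈ Set.Icc (0 : ℝ) 1) →
      ∀ᵐ ω ∂P, (P[Set.indicator {ω' | p j ω' ≤ a ω'} (fun _ => (1 : ℝ)) | ℱ (j - 1)]) ω ≤ a ω) :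
    ∀ t ≤ k,
      ∫⁻ ω, ENNReal.ofReal
          (∑ j ∈ (Finset.Icc 1 t).filter (· ∈ H₀),
            αf j ω * (if lamf j ω < p j ω then (1 : ℝ) else 0) / (1 - lamf j ω)) ∂P ≥
        ∫⁻ ω, ENNReal.ofReal
          (∑ j ∈ (Finset.Icc 1 t).filter (· ∈ H₀),
            (if p j ω ≤ αf j ω then (1 : ℝ) else 0)) ∂P := by
  intro t _
  have hα : ∀ j, Measurable (αf j) := fun j => (hαf_meas j).mono (ℱ.le _) le_rfl
  have hlam : ∀ j, Measurable (lamf j) := fun j => (hlamf_meas j).mono (ℱ.le _) le_rfl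
  refine lintegral_ofReal_sum_le_lintegral_ofReal_sum _
    (fun j _ => (Measurable.ite (measurableSet_le (hp_meas j) (hα j)) measurable_const
      measurable_const).aemeasurable)
    (fun j _ => (((hα j).mul (Measurable.ite (measurableSet_lt (hlam j) (hp_meas j))
      measurable_const measurable_const)).div (measurable_const.sub (hlam j))).aemeasurable)
    (fun j _ ω => by positivity)
    (fun j _ ω => div_nonneg (mul_nonneg (hαf_range j ω).1.le (by positivity))
      (sub_pos.2 (hlamf_range j ω).2).le) fun j hj => ?_
  have hjH : j ∈ H₀ := (Finset.mem_filter.1 hj).2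
  exact lintegral_ite_le_le_lintegral_mul_ite_lt_div (ℱ.le (j - 1)) (hp_meas j)
    (hαf_meas j) (hlamf_meas j) (fun ω => Set.Ioo_subset_Icc_self (hαf_range j ω))
    (fun ω => Set.Ioo_subset_Ico_self (hlamf_range j ω))
    (h_su j hjH _ (hαf_meas j) fun ω => Set.Ioo_subset_Icc_self (hαf_range j ω))
    (h_su j hjH _ (hlamf_meas j) fun ω => Set.Ioo_subset_Icc_self (hlamf_range j ω))

theorem saffron_false_rejection_bound {Ω : Type*} {F : MeasurableSpace Ω} (P : Measure Ω)
    [IsProbabilityMeasure P] (ℱ : Filtration ℕ F) (k : ℕ) (hk : 1 ≤ k)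
    (p : ℕ → Ω → ℝ) (hp_meas : ∀ j, Measurable (p j))
    (hp_range : ∀ j ω, p j ω ∈ Set.Ioc (0 : ℝ) 1)
    (H₀ : Finset ℕ) (hH₀ : H₀ ⊆ Finset.Icc 1 k)
    (αf lamf : ℕ → Ω → ℝ)
    (hαf_meas : ∀ j, Measurable[ℱ (j - 1)] (αf j))
    (hlamf_meas : ∀ j, Measurable[ℱ (j - 1)] (lamf j))
    (hαf_range : ∀ j ω, αf j ω ∈ Set.Ioo (0 : ℝ) 1)
    (hlamf_range : ∀ j ω, lamf j ω ∈ Set.Ioo (0 : ℝ) 1)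
    -- `R_j = 𝟙{p_j ≤ α_j}` and `C_j = 𝟙{p_j ≤ λ_j}` are `F_j`-measurable
    (hR_meas : ∀ j, MeasurableSet[ℱ j] {ω | p j ω ≤ αf j ω})
    (hC_meas : ∀ j, MeasurableSet[ℱ j] {ω | p j ω ≤ lamf j ω})
    -- conditional super-uniformity of the null p-values
    (h_su : ∀ j ∈ H₀, ∀ a : Ω → ℝ, Measurable[ℱ (j - 1)] a →
      (∀ ω, a ω ∈ Set.Icc (0 : ℝ) 1) →
      ∀ᵐ ω ∂P, (P[Set.indicator {ω' | p j ω' ≤ a ω'} (fun _ => (1 : ℝ)) | ℱ (j - 1)]) ω ≤ a ω) :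
    ∀ t ≤ k,
      ∫⁻ ω, ENNReal.ofReal
          (∑ j ∈ (Finset.Icc 1 t).filter (· ∈ H₀),
            αf j ω * (if lamf j ω < p j ω then (1 : ℝ) else 0) / (1 - lamf j ω)) ∂P ≥
        ∫⁻ ω, ENNReal.ofReal
          (∑ j ∈ (Finset.Icc 1 t).filter (· ∈ H₀),
            (if p j ω ≤ αf j ω then (1 : ℝ) else 0)) ∂P :=
  saffron_false_rejection_bound_general P ℱ k p hp_meas H₀ αf lamf hαf_meas hlamf_meas hαf_range
    hlamf_range h_su
end

section
/- Let (Ω, F, P) be a probability space with a filtration (F_t)_{t≥0}, let p₁, …, p_k be random variables with values in (0,1], let H₀ ⊆ {1,…,k}, and fix α ∈ (0,1). For each t ≤ k, let α_t and λ_t be F_{t−1}-measurable random variables with values in (0,1), define R_t = 𝟙{p_t ≤ α_t}, and assume R_t and 𝟙{p_t ≤ λ_t} are F_t-measurable. Assume that for every j ∈ H₀ and every F_{j−1}-measurable random variable a with values in [0,1], P(p_j ≤ a | F_{j−1}) ≤ a almost surely, and that almost surely Σ_{j≤t} α_j·𝟙{p_j > λ_j}/(1 − λ_j) ≤ α·Σ_{j≤t}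 R_j for all t ≤ k. Then for every t ≤ k with E[Σ_{j≤t} R_j] > 0, mFDR(t) := E[Σ_{j≤t, j∈H₀} R_j] / E[Σ_{j≤t} R_j] ≤ α. -/
/-!
For a null index `j`, super-uniformity of `p_j` given `ℱ (j - 1)` yields `E[R_j] ≤ E[α_j]`.
Applied at level `λ_j` it yields `P(p_j > λ_j | ℱ (j - 1)) ≥ 1 - λ_j`, and pulling the
predictable factor `α_j / (1 - λ_j)` out of the conditional expectation turns this into
`E[α_j] ≤ E[α_j 𝟙{p_j > λ_j} / (1 - λ_j)]`. Summing over the nulls, adding the nonnegative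
terms of the non-nulls, and integrating the SAFFRON constraint gives
`E[#null rejections] ≤ α E[#rejections]`.
-/

open MeasureTheory ProbabilityTheory Real

def CondSuperUniform {Ω : Type*} [MeasurableSpace Ω] (P : Measure Ω) (m : MeasurableSpace Ω)
    (p : Ω → ℝ) : Prop :=
  ∀ b : Ω → ℝ, Measurable[m] b → (∀ ω, b ω ∈ Set.Icc (0 : ℝ) 1) →
    ∀ᵐ ω ∂P, (P[Set.indicator {ω' | p ω' ≤ b ω'} (fun _ => (1 : ℝ)) | m]) ω ≤ b ω

section CondExp

variable {Ω : Type*} {m mΩ : MeasurableSpace Ω} {P : Measure Ω}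

theorem integral_le_of_condExp_le (hm : m ≤ mΩ) [SigmaFinite (P.trim hm)] {f g : Ω → ℝ}
    (hg : Integrable g P) (h : P[f | m] ≤ᵐ[P] g) : ∫ ω, f ω ∂P ≤ ∫ ω, g ω ∂P := by
  rw [← integral_condExp hm]
  exact integral_mono_ae integrable_condExp hg h

namespace CondSuperUniform

variable [IsFiniteMeasure P] {p a lam : Ω → ℝ}

theorem integral_ite_le_le_integral (hm : m ≤ mΩ) (hu : CondSuperUniform P m p)
    (ha : Measurable[m] a) (ha01 : ∀ ω, a ω ∈ Set.Icc (0 : ℝ) 1) :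
    ∫ ω, (if p ω ≤ a ω then (1 : ℝ) else 0) ∂P ≤ ∫ ω, a ω ∂P := by
  have ha_int : Integrable a P :=
    .of_bound (ha.mono hm le_rfl).aestronglyMeasurable 1
      (ae_of_all _ fun ω => by rw [norm_of_nonneg (ha01 ω).1]; exact (ha01 ω).2)
  have h_ind : (fun ω => if p ω ≤ a ω then (1 : ℝ) else 0) =
      {ω | p ω ≤ a ω}.indicator fun _ => 1 := by
    ext ω; simp [Set.indicator_apply]
  refine integral_le_of_condExp_le hm ha_int ?_
  rw [h_ind]
  exact hu a ha ha01

theorem one_sub_le_condExp_ite_lt (hm : m ≤ mΩ) (hu : CondSuperUniform P m p) (hp : Measurable p)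
    (hlam : Measurable[m] lam) (hlam01 : ∀ ω, lam ω ∈ Set.Icc (0 : ℝ) 1) :
    (fun ω => 1 - lam ω) ≤ᵐ[P] P[fun ω => if lam ω < p ω then (1 : ℝ) else 0 | m] := by
  set C := {ω | p ω ≤ lam ω}.indicator (fun _ => (1 : ℝ))
  have hC_int : Integrable C P :=
    (integrable_const 1).indicator (measurableSet_le hp (hlam.mono hm le_rfl))
  have h_compl : (fun ω => if lam ω < p ω then (1 : ℝ) else 0) = (fun _ => 1) - C := by
    ext ω
    by_cases h : p ω ≤ lam ω <;> simp [C, h]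
  have h_condExp : P[(fun _ => (1 : ℝ)) - C | m] =ᵐ[P] (fun _ => 1) - P[C | m] := by
    simpa only [condExp_const hm] using condExp_sub (integrable_const 1) hC_int m
  rw [h_compl]
  filter_upwards [h_condExp, hu lam hlam hlam01] with ω h_eq h_le
  rw [h_eq, Pi.sub_apply]
  linarith

theorem integral_le_integral_mul_ite_lt_div (hm : m ≤ mΩ) (hu : CondSuperUniform P m p)
    (hp : Measurable p) (ha : Measurable[m] a) (hlam : Measurable[m] lam) (ha0 : ∀ ω, 0 ≤ a ω)
    (hlam01 : ∀ ω, lam ω ∈ Set.Ico (0 : ℝ) 1)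
    (hT : Integrable (fun ω => a ω * (if lam ω < p ω then (1 : ℝ) else 0) / (1 - lam ω)) P) :
    ∫ ω, a ω ∂P ≤ ∫ ω, a ω * (if lam ω < p ω then (1 : ℝ) else 0) / (1 - lam ω) ∂P := by
  set g := fun ω => a ω / (1 - lam ω)
  set H := fun ω => if lam ω < p ω then (1 : ℝ) else 0
  have hT_eq : (fun ω => a ω * H ω / (1 - lam ω)) = g * H := by
    ext ω; simp only [g, Pi.mul_apply]; ring
  have hH_int : Integrable H P :=
    .of_bound (Measurable.ite (measurableSet_lt (hlam.mono hm le_rfl) hp) measurable_const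
      measurable_const).aestronglyMeasurable 1
      (ae_of_all _ fun ω => by by_cases h : lam ω < p ω <;> simp [H, h])
  have h_pull : P[g * H | m] =ᵐ[P] g * P[H | m] :=
    condExp_mul_of_stronglyMeasurable_left (ha.div (measurable_const.sub hlam)).stronglyMeasurable
      (hT_eq ▸ hT) hH_int
  have h_ge : (fun ω => 1 - lam ω) ≤ᵐ[P] P[H | m] :=
    hu.one_sub_le_condExp_ite_lt hm hp hlam fun ω => Set.Ico_subset_Icc_self (hlam01 ω)
  have h_pointwise : a ≤ᵐ[P] g * P[H | m] := by
    filter_upwards [h_ge] with ω h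
    have h_pos : 0 < 1 - lam ω := by linarith [(hlam01 ω).2]
    calc a ω = g ω * (1 - lam ω) := (div_mul_cancel₀ _ h_pos.ne').symm
      _ ≤ g ω * P[H | m] ω := by gcongr; exact div_nonneg (ha0 ω) h_pos.le
  calc ∫ ω, a ω ∂P ≤ ∫ ω, (g * P[H | m]) ω ∂P :=
        integral_mono_of_nonneg (ae_of_all _ ha0) (integrable_condExp.congr h_pull) h_pointwise
    _ = ∫ ω, (g * H) ω ∂P := by rw [← integral_congr_ae h_pull, integral_condExp hm]
    _ = _ := by rw [← hT_eq]

end CondSuperUniform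

end CondExp

section FiniteSums

variable {Ω ι : Type*} [MeasurableSpace Ω] {P : Measure Ω} {s : Finset ι}

theorem integrable_of_sum_le {T : ι → Ω → ℝ} {g : Ω → ℝ} (hg : Integrable g P)
    (hT : ∀ j ∈ s, AEStronglyMeasurable (T j) P) (hT0 : ∀ j ∈ s, ∀ ω, 0 ≤ T j ω)
    (h : ∀ᵐ ω ∂P, ∑ j ∈ s, T j ω ≤ g ω) : ∀ j ∈ s, Integrable (T j) P := by
  intro j hj
  refine hg.mono' (hT j hj) ?_
  filter_upwards [h] with ω hω
  rw [norm_of_nonneg (hT0 j hj ω)]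
  exact (Finset.single_le_sum (fun i hi => hT0 i hi ω) hj).trans hω

theorem integral_sum_filter_le_mul_integral_sum {q : ι → Prop} [DecidablePred q]
    {R T : ι → Ω → ℝ} {c : ℝ} (hR : ∀ j ∈ s, Integrable (R j) P) (hT : ∀ j ∈ s, Integrable (T j) P)
    (hT0 : ∀ j ∈ s, ∀ ω, 0 ≤ T j ω) (hRT : ∀ j ∈ s, q j → ∫ ω, R j ω ∂P ≤ ∫ ω, T j ω ∂P)
    (hTR : ∀ᵐ ω ∂P, ∑ j ∈ s, T j ω ≤ c * ∑ j ∈ s, R j ω) :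
    ∫ ω, ∑ j ∈ s.filter q, R j ω ∂P ≤ c * ∫ ω, ∑ j ∈ s, R j ω ∂P := by
  have hR' : ∀ j ∈ s.filter q, Integrable (R j) P :=
    fun j hj => hR j (Finset.mem_filter.1 hj).1
  calc ∫ ω, ∑ j ∈ s.filter q, R j ω ∂P = ∑ j ∈ s.filter q, ∫ ω, R j ω ∂P :=
        integral_finsetSum _ hR'
    _ ≤ ∑ j ∈ s.filter q, ∫ ω, T j ω ∂P :=
        Finset.sum_le_sum fun j hj => hRT j (Finset.mem_filter.1 hj).1 (Finset.mem_filter.1 hj).2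
    _ ≤ ∑ j ∈ s, ∫ ω, T j ω ∂P :=
        Finset.sum_le_sum_of_subset_of_nonneg (Finset.filter_subset _ _)
          fun j hj _ => integral_nonneg (hT0 j hj)
    _ = ∫ ω, ∑ j ∈ s, T j ω ∂P := (integral_finsetSum _ hT).symm
    _ ≤ ∫ ω, c * ∑ j ∈ s, R j ω ∂P :=
        integral_mono_ae (integrable_finsetSum _ hT)
          ((integrable_finsetSum _ hR).const_mul c) hTR
    _ = c * ∫ ω, ∑ j ∈ s, R j ω ∂P := integral_const_mul c _

end FiniteSums

theorem lintegral_ofReal_div_le_ofReal {Ω : Type*} [MeasurableSpace Ω] {P : Measure Ω}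
    {f g : Ω → ℝ} {c : ℝ} (hf : Integrable f P) (hg : Integrable g P) (hf0 : 0 ≤ᵐ[P] f)
    (hg0 : 0 ≤ᵐ[P] g) (hc : 0 ≤ c) (h : ∫ ω, f ω ∂P ≤ c * ∫ ω, g ω ∂P) :
    (∫⁻ ω, ENNReal.ofReal (f ω) ∂P) / (∫⁻ ω, ENNReal.ofReal (g ω) ∂P) ≤ ENNReal.ofReal c := by
  rw [← ofReal_integral_eq_lintegral_ofReal hf hf0, ← ofReal_integral_eq_lintegral_ofReal hg hg0]
  exact ENNReal.div_le_of_le_mul ((ENNReal.ofReal_le_ofReal h).trans_eq (ENNReal.ofReal_mul hc))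

theorem saffron_mFDR_control_general {Ω : Type*} {F : MeasurableSpace Ω} (P : Measure Ω)
    [IsProbabilityMeasure P] (ℱ : Filtration ℕ F) (k : ℕ)
    (p : ℕ → Ω → ℝ) (hp_meas : ∀ j, Measurable (p j))
    (H₀ : Finset ℕ)
    (α : ℝ) (hα : α ∈ Set.Ioo (0 : ℝ) 1)
    (αf lamf : ℕ → Ω → ℝ)
    (hαf_meas : ∀ j, Measurable[ℱ (j - 1)] (αf j))
    (hlamf_meas : ∀ j, Measurable[ℱ (j - 1)] (lamf j))
    (hαf_range : ∀ j ω, αf j ω ∈ Set.Ioo (0 : ℝ) 1)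
    (hlamf_range : ∀ j ω, lamf j ω ∈ Set.Ioo (0 : ℝ) 1)
    -- conditional super-uniformity of the null p-values
    (h_su : ∀ j ∈ H₀, ∀ a : Ω → ℝ, Measurable[ℱ (j - 1)] a →
      (∀ ω, a ω ∈ Set.Icc (0 : ℝ) 1) →
      ∀ᵐ ω ∂P, (P[Set.indicator {ω' | p j ω' ≤ a ω'} (fun _ => (1 : ℝ)) | ℱ (j - 1)]) ω ≤ a ω)
    -- the SAFFRON estimate of the FDP is controlled at level α, almost surely, at all times
    (h_fdp : ∀ᵐ ω ∂P, ∀ t ≤ k,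
      ∑ j ∈ Finset.Icc 1 t,
          αf j ω * (if lamf j ω < p j ω then (1 : ℝ) else 0) / (1 - lamf j ω) ≤
        α * ∑ j ∈ Finset.Icc 1 t, (if p j ω ≤ αf j ω then (1 : ℝ) else 0)) :
    ∀ t ≤ k,
      0 < ∫⁻ ω, ENNReal.ofReal
          (∑ j ∈ Finset.Icc 1 t, (if p j ω ≤ αf j ω then (1 : ℝ) else 0)) ∂P →
      (∫⁻ ω, ENNReal.ofReal
          (∑ j ∈ (Finset.Icc 1 t).filter (· ∈ H₀),
            (if p j ω ≤ αf j ω then (1 : ℝ) else 0)) ∂P) /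
        (∫⁻ ω, ENNReal.ofReal
          (∑ j ∈ Finset.Icc 1 t, (if p j ω ≤ αf j ω then (1 : ℝ) else 0)) ∂P) ≤
      ENNReal.ofReal α := by
  intro t ht _
  have hαf_meas' j : Measurable (αf j) := (hαf_meas j).mono (ℱ.le _) le_rfl
  have hlamf_meas' j : Measurable (lamf j) := (hlamf_meas j).mono (ℱ.le _) le_rfl
  have hR0 j ω : (0 : ℝ) ≤ if p j ω ≤ αf j ω then 1 else 0 := by split_ifs <;> norm_num
  have hR_int j : Integrable (fun ω => if p j ω ≤ αf j ω then (1 : ℝ) else 0) P :=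
    .of_bound (Measurable.ite (measurableSet_le (hp_meas j) (hαf_meas' j)) measurable_const
      measurable_const).aestronglyMeasurable 1 (ae_of_all _ fun ω => by split_ifs <;> norm_num)
  have hS_int := integrable_finsetSum (Finset.Icc 1 t) fun j _ => hR_int j
  have hS0 :=
    ae_of_all P fun ω => Finset.sum_nonneg fun j (_ : j ∈ Finset.Icc 1 t) => hR0 j ω
  have hT0 j ω : 0 ≤ αf j ω * (if lamf j ω < p j ω then (1 : ℝ) else 0) / (1 - lamf j ω) :=
    div_nonneg (mul_nonneg (hαf_range j ω).1.le (by split_ifs <;> norm_num))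
      (sub_nonneg.2 (hlamf_range j ω).2.le)
  have hT_meas j : Measurable fun ω =>
      αf j ω * (if lamf j ω < p j ω then (1 : ℝ) else 0) / (1 - lamf j ω) :=
    ((hαf_meas' j).mul (Measurable.ite (measurableSet_lt (hlamf_meas' j) (hp_meas j))
      measurable_const measurable_const)).div (measurable_const.sub (hlamf_meas' j))
  have h_fdp_t := h_fdp.mono fun ω h => h t ht
  have hT_int := integrable_of_sum_le (hS_int.const_mul α)
    (fun j _ => (hT_meas j).aestronglyMeasurable) (fun j _ => hT0 j) h_fdp_t
  refine lintegral_ofReal_div_le_ofReal (integrable_finsetSum _ fun j _ => hR_int j) hS_int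
    (ae_of_all P fun ω => Finset.sum_nonneg fun j _ => hR0 j ω) hS0 hα.1.le
    (integral_sum_filter_le_mul_integral_sum (fun j _ => hR_int j) hT_int (fun j _ => hT0 j) ?_
      h_fdp_t)
  intro j hj hj₀
  have hu : CondSuperUniform P (ℱ (j - 1)) (p j) := h_su j hj₀
  exact (hu.integral_ite_le_le_integral (ℱ.le _) (hαf_meas j)
      fun ω => Set.Ioo_subset_Icc_self (hαf_range j ω)).trans
    (hu.integral_le_integral_mul_ite_lt_div (ℱ.le _) (hp_meas j) (hαf_meas j) (hlamf_meas j)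
      (fun ω => (hαf_range j ω).1.le) (fun ω => Set.Ioo_subset_Ico_self (hlamf_range j ω))
      (hT_int j hj))

theorem saffron_mFDR_control {Ω : Type*} {F : MeasurableSpace Ω} (P : Measure Ω)
    [IsProbabilityMeasure P] (ℱ : Filtration ℕ F) (k : ℕ) (hk : 1 ≤ k)
    (p : ℕ → Ω → ℝ) (hp_meas : ∀ j, Measurable (p j))
    (hp_range : ∀ j ω, p j ω ∈ Set.Ioc (0 : ℝ) 1)
    (H₀ : Finset ℕ) (hH₀ : H₀ ⊆ Finset.Icc 1 k)
    (α : ℝ) (hα : α ∈ Set.Ioo (0 : ℝ) 1)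
    (αf lamf : ℕ → Ω → ℝ)
    (hαf_meas : ∀ j, Measurable[ℱ (j - 1)] (αf j))
    (hlamf_meas : ∀ j, Measurable[ℱ (j - 1)] (lamf j))
    (hαf_range : ∀ j ω, αf j ω ∈ Set.Ioo (0 : ℝ) 1)
    (hlamf_range : ∀ j ω, lamf j ω ∈ Set.Ioo (0 : ℝ) 1)
    -- `R_j = 𝟙{p_j ≤ α_j}` and `𝟙{p_j ≤ λ_j}` are `F_j`-measurable
    (hR_meas : ∀ j, MeasurableSet[ℱ j] {ω | p j ω ≤ αf j ω})
    (hC_meas : ∀ j, MeasurableSet[ℱ j] {ω | p j ω ≤ lamf j ω})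
    -- conditional super-uniformity of the null p-values
    (h_su : ∀ j ∈ H₀, ∀ a : Ω → ℝ, Measurable[ℱ (j - 1)] a →
      (∀ ω, a ω ∈ Set.Icc (0 : ℝ) 1) →
      ∀ᵐ ω ∂P, (P[Set.indicator {ω' | p j ω' ≤ a ω'} (fun _ => (1 : ℝ)) | ℱ (j - 1)]) ω ≤ a ω)
    -- the SAFFRON estimate of the FDP is controlled at level α, almost surely, at all times
    (h_fdp : ∀ᵐ ω ∂P, ∀ t ≤ k,
      ∑ j ∈ Finset.Icc 1 t,
          αf j ω * (if lamf j ω < p j ω then (1 : ℝ) else 0) / (1 - lamf j ω) ≤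
        α * ∑ j ∈ Finset.Icc 1 t, (if p j ω ≤ αf j ω then (1 : ℝ) else 0)) :
    ∀ t ≤ k,
      0 < ∫⁻ ω, ENNReal.ofReal
          (∑ j ∈ Finset.Icc 1 t, (if p j ω ≤ αf j ω then (1 : ℝ) else 0)) ∂P →
      (∫⁻ ω, ENNReal.ofReal
          (∑ j ∈ (Finset.Icc 1 t).filter (· ∈ H₀),
            (if p j ω ≤ αf j ω then (1 : ℝ) else 0)) ∂P) /
        (∫⁻ ω, ENNReal.ofReal
          (∑ j ∈ Finset.Icc 1 t, (if p j ω ≤ αf j ω then (1 : ℝ) else 0)) ∂P) ≤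
      ENNReal.ofReal α :=
  saffron_mFDR_control_general P ℱ k p hp_meas H₀ α hα αf lamf hαf_meas hlamf_meas hαf_range
    hlamf_range h_su h_fdp
end

section
/- Fix an integer n ≥ 1 and θ ∈ [0, 1/2], and let T be a random variable with the binomial distribution with parameters n and θ. Define p : {0, 1, …, n} → ℝ by p(t) = Σ_{k=t}^{n} (n choose k)·2^{−n}. Then for every u ∈ [0,1], P(p(T) ≤ u) ≤ u. -/
/-!
The event `{p(T) ≤ u}` lies in `{t₀ ≤ T}`, where `t₀` is the least `t` with
`p t ≤ u`. Its probability is the binomial upper tail `∑_{k ≥ t₀} C(n,k) θ^k (1-θ)^(n-k)`, which is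
nondecreasing in `θ` (its derivative is `n` times a Bernstein polynomial of degree `n - 1`, by
telescoping), so it is at most its value at `θ = 1/2`, which is `p t₀ ≤ u`.
-/

open Polynomial Finset

theorem bernsteinPolynomial.eval_eq {R : Type*} [CommRing R] (n k : ℕ) (x : R) :
    (bernsteinPolynomial R n k).eval x = n.choose k * x ^ k * (1 - x) ^ (n - k) := by
  simp [bernsteinPolynomial]

theorem bernsteinPolynomial.eval_nonneg {n k : ℕ} {x : ℝ} (hx : x ∈ Set.Icc (0 : ℝ) 1) :
    0 ≤ (bernsteinPolynomial ℝ n k).eval x :=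
  bernstein_nonneg (x := ⟨x, hx⟩)

noncomputable def binomialTail (R : Type*) [CommRing R] (n t : ℕ) : R[X] :=
  ∑ k ∈ Icc t n, bernsteinPolynomial R n k

namespace binomialTail

variable (R : Type*) [CommRing R]

theorem zero_right (n : ℕ) : binomialTail R n 0 = 1 := by
  rw [binomialTail, ← Nat.range_succ_eq_Icc_zero, bernsteinPolynomial.sum]

theorem derivative_succ (n s : ℕ) :
    derivative (binomialTail R n (s + 1)) = n * bernsteinPolynomial R (n - 1) s := by
  rcases le_or_gt s n with hs | hs
  · have hvanish : (n : R[X]) * bernsteinPolynomial R (n - 1) n = 0 := by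
      rcases n with _ | n
      · simp
      · rw [bernsteinPolynomial.eq_zero_of_lt R (by omega), mul_zero]
    have htelescope := sum_Ico_sub (fun i => -bernsteinPolynomial R (n - 1) i) hs
    simp only [neg_sub_neg] at htelescope
    rw [binomialTail, ← Ico_add_one_right_eq_Icc, ← sum_Ico_add', derivative_sum]
    simp only [bernsteinPolynomial.derivative_succ]
    rw [← mul_sum, htelescope, mul_sub, hvanish, sub_zero]
  · rw [binomialTail, Icc_eq_empty (by omega), sum_empty, derivative_zero,
      bernsteinPolynomial.eq_zero_of_lt R (by omega), mul_zero]

theorem eval_nonneg {n t : ℕ} {x : ℝ} (hx : x ∈ Set.Icc (0 : ℝ) 1) :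
    0 ≤ (binomialTail ℝ n t).eval x := by
  rw [binomialTail, eval_finsetSum]
  exact sum_nonneg fun k _ => bernsteinPolynomial.eval_nonneg hx

theorem monotoneOn_eval (n t : ℕ) :
    MonotoneOn (fun x => (binomialTail ℝ n t).eval x) (Set.Icc 0 1) := by
  refine monotoneOn_of_deriv_nonneg (convex_Icc 0 1) (Polynomial.continuousOn _)
    (Polynomial.differentiableOn _) fun x hx => ?_
  rw [Polynomial.deriv]
  rcases t with _ | s
  · simp [zero_right]
  · rw [derivative_succ, eval_mul, eval_natCast]
    exact mul_nonneg n.cast_nonneg (bernsteinPolynomial.eval_nonneg (interior_subset hx))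

theorem eval_half (n t : ℕ) :
    (binomialTail ℝ n t).eval (1 / 2) = ∑ k ∈ Icc t n, (n.choose k : ℝ) / 2 ^ n := by
  rw [binomialTail, eval_finsetSum]
  refine sum_congr rfl fun k hk => ?_
  rw [bernsteinPolynomial.eval_eq, show (1 : ℝ) - 1 / 2 = 1 / 2 by norm_num, mul_assoc,
    ← pow_add, Nat.add_sub_cancel' (mem_Icc.1 hk).2, div_pow, one_pow, mul_one_div]

end binomialTail

open MeasureTheory

theorem measure_setOf_le_le_sum_Icc {Ω : Type*} [MeasurableSpace Ω] (μ : Measure Ω) {T : Ω → ℕ}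
    {n : ℕ} (hT : ∀ ω, T ω ≤ n) (t : ℕ) :
    μ {ω | t ≤ T ω} ≤ ∑ k ∈ Icc t n, μ {ω | T ω = k} := by
  refine (measure_mono fun ω hω => ?_).trans (measure_biUnion_finset_le _ _)
  exact Set.mem_biUnion (mem_Icc.2 ⟨hω, hT ω⟩) rfl

theorem binomial_pvalue_superuniform_general {Ω : Type*} [MeasurableSpace Ω] (P : Measure Ω)
    [IsProbabilityMeasure P] (n : ℕ) (θ : ℝ) (hθ₀ : 0 ≤ θ) (hθ₁ : θ ≤ 1 / 2)
    (T : Ω → ℕ) (hT_range : ∀ ω, T ω ≤ n)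
    -- `T` has the binomial distribution with parameters `n` and `θ`
    (hT_binom : ∀ t ≤ n,
      P {ω | T ω = t} = ENNReal.ofReal ((n.choose t : ℝ) * θ ^ t * (1 - θ) ^ (n - t)))
    (p : ℕ → ℝ) (hp : ∀ t, p t = ∑ j ∈ Finset.Icc t n, (n.choose j : ℝ) / 2 ^ n) :
    ∀ u : ℝ, 0 ≤ u → u ≤ 1 → P {ω | p (T ω) ≤ u} ≤ ENNReal.ofReal u := by
  intro u hu₀ _
  have hθ : θ ∈ Set.Icc (0 : ℝ) 1 := ⟨hθ₀, by linarith⟩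
  have hex : ∃ t, p t ≤ u := ⟨n + 1, by simpa [hp] using hu₀⟩
  calc P {ω | p (T ω) ≤ u}
      ≤ P {ω | Nat.find hex ≤ T ω} := measure_mono fun ω hω => Nat.find_min' hex hω
    _ ≤ ∑ k ∈ Icc (Nat.find hex) n, P {ω | T ω = k} := measure_setOf_le_le_sum_Icc P hT_range _
    _ = ENNReal.ofReal ((binomialTail ℝ n (Nat.find hex)).eval θ) := by
      rw [binomialTail, eval_finsetSum, ENNReal.ofReal_sum_of_nonneg
        fun k _ => bernsteinPolynomial.eval_nonneg hθ]
      exact sum_congr rfl fun k hk => by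
        rw [hT_binom k (mem_Icc.1 hk).2, bernsteinPolynomial.eval_eq]
    _ ≤ ENNReal.ofReal ((binomialTail ℝ n (Nat.find hex)).eval (1 / 2)) :=
      ENNReal.ofReal_le_ofReal <| binomialTail.monotoneOn_eval n _ hθ (by norm_num) hθ₁
    _ ≤ ENNReal.ofReal u := by
      rw [binomialTail.eval_half, ← hp]
      exact ENNReal.ofReal_le_ofReal (Nat.find_spec hex)

theorem binomial_pvalue_superuniform {Ω : Type*} [MeasurableSpace Ω] (P : Measure Ω)
    [IsProbabilityMeasure P] (n : ℕ) (hn : 1 ≤ n) (θ : ℝ) (hθ₀ : 0 ≤ θ) (hθ₁ : θ ≤ 1 / 2)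
    (T : Ω → ℕ) (hT_meas : Measurable T) (hT_range : ∀ ω, T ω ≤ n)
    -- `T` has the binomial distribution with parameters `n` and `θ`
    (hT_binom : ∀ t ≤ n,
      P {ω | T ω = t} = ENNReal.ofReal ((n.choose t : ℝ) * θ ^ t * (1 - θ) ^ (n - t)))
    (p : ℕ → ℝ) (hp : ∀ t, p t = ∑ j ∈ Finset.Icc t n, (n.choose j : ℝ) / 2 ^ n) :
    ∀ u : ℝ, 0 ≤ u → u ≤ 1 → P {ω | p (T ω) ≤ u} ≤ ENNReal.ofReal u :=
  binomial_pvalue_superuniform_general P n θ hθ₀ hθ₁ T hT_range hT_binom p hp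
end
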